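/- The TQt-rank is well-defined: if A = U ⋆_QT D ⋆_QT V^H and A = U' ⋆_QT D' ⋆_QT V'^H are two TQt-SVDs of the same quaternion tensor A (with the same transforms, U, U', V, V' unitary, D, D' f-diagonal in the transform domain with nonnegative nonincreasing diagonal entries in each slice), then for every index k and every slice index ν, the diagonal entries satisfy D̂(k,k,ν) = D̂'(k,k,ν); in particular the number of nonzero diagonal tubes, and hence the TQt-rank, is the same. -/
import Mathlib


open scoped Quaternion
open Matrix

noncomputable section

/-- An `L`th-order quaternion tensor, modeled as a family of frontal-slice
quaternion matrices indexed by the multi-index `ν = (n₃,…,n_L) : ι`. -/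
abbrev QT (ι : Type*) (m n : ℕ) := ι → Matrix (Fin m) (Fin n) ℍ[ℝ]

variable {ι : Type*} [Fintype ι] [DecidableEq ι]

/-- The hat transform `Â = A ×₃ T₃ ⋯ ×_L T_L`, with `T` the combined invertible
quaternion transform acting on the tube fibers. -/
def hatT (T : Matrix ι ι ℍ[ℝ]) {m n : ℕ} (A : QT ι m n) : QT ι m n :=
  fun ν i j => ∑ μ, T ν μ * A μ i j

/-- The facewise product `⋆_QF`: slice-wise quaternion matrix product. -/
def qf {m p n : ℕ} (A : QT ι m p) (B : QT ι p n) : QT ι m n :=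
  fun ν => A ν * B ν

/-- The `⋆_QT` product; `T` is the combined transform and `S` its inverse. -/
def qt (T S : Matrix ι ι ℍ[ℝ]) {m p n : ℕ} (A : QT ι m p) (B : QT ι p n) : QT ι m n :=
  hatT S (qf (hatT T A) (hatT T B))

/-- The identity quaternion tensor: every transform-domain slice is `I_P`. -/
def qtId (S : Matrix ι ι ℍ[ℝ]) (p : ℕ) : QT ι p p := hatT S (fun _ => 1)

/-- Conjugate transpose, defined slice-wise in the transform domain. -/
def qtH (T S : Matrix ι ι ℍ[ℝ]) {m n : ℕ} (A : QT ι m n) : QT ι n m :=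
  hatT S (fun ν => (hatT T A ν)ᴴ)

/-- A quaternion matrix is unitary. -/
def qUnitaryM {p : Type*} [Fintype p] [DecidableEq p] (Q : Matrix p p ℍ[ℝ]) : Prop :=
  Qᴴ * Q = 1 ∧ Q * Qᴴ = 1

/-- A quaternion tensor is unitary for the `⋆_QT` product. -/
def qtUnitary (T S : Matrix ι ι ℍ[ℝ]) {p : ℕ} (U : QT ι p p) : Prop :=
  qt T S (qtH T S U) U = qtId S p ∧ qt T S U (qtH T S U) = qtId S p

/-- Frobenius norm of a quaternion tensor. -/
def frob {m n : ℕ} (A : QT ι m n) : ℝ :=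
  Real.sqrt (∑ ν, ∑ i, ∑ j, ‖A ν i j‖ ^ 2)

/-- Frobenius norm of a quaternion matrix. -/
def frobM {m n : ℕ} (M : Matrix (Fin m) (Fin n) ℍ[ℝ]) : ℝ :=
  Real.sqrt (∑ i, ∑ j, ‖M i j‖ ^ 2)

/-- The `k`-th diagonal tube `D(k,k,:,…,:)` of a quaternion tensor. -/
def diagTube {m n : ℕ} (D : QT ι m n) (k : ℕ) : ι → ℍ[ℝ] :=
  fun ν => if h : k < m ∧ k < n then D ν ⟨k, h.1⟩ ⟨k, h.2⟩ else 0

/-- Frobenius norm of the `k`-th diagonal tube. -/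
def tubeNorm {m n : ℕ} (D : QT ι m n) (k : ℕ) : ℝ :=
  Real.sqrt (∑ ν, ‖diagTube D k ν‖ ^ 2)

/-- The TQt-rank: the number of nonzero diagonal tubes of the f-diagonal factor. -/
def tqtRank {m n : ℕ} (D : QT ι m n) : ℕ :=
  ((Finset.range (min m n)).filter (fun k => 0 < tubeNorm D k)).card

/-- Rank of a quaternion matrix: dimension of the span of its columns as a
right `ℍ`-module (i.e. a module over `ℍᵐᵒᵖ`). -/
def qrank {m n : ℕ} (M : Matrix (Fin m) (Fin n) ℍ[ℝ]) : ℕ :=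
  Module.finrank ℍ[ℝ]ᵐᵒᵖ
    (Submodule.span ℍ[ℝ]ᵐᵒᵖ (Set.range fun j : Fin n => fun i : Fin m => M i j))

/-- Real diagonal quaternion matrix with diagonal entries `σ 0, σ 1, …`. -/
def realDiag (m n : ℕ) (σ : ℕ → ℝ) : Matrix (Fin m) (Fin n) ℍ[ℝ] :=
  fun i j => if (i : ℕ) = (j : ℕ) then ((σ (i : ℕ) : ℝ) : ℍ[ℝ]) else 0

/-- Truncated real diagonal matrix keeping only the first `s` diagonal entries. -/
def realDiagTrunc (m n : ℕ) (σ : ℕ → ℝ) (s : ℕ) : Matrix (Fin m) (Fin n) ℍ[ℝ] :=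
  fun i j => if (i : ℕ) = (j : ℕ) ∧ (i : ℕ) < s then ((σ (i : ℕ) : ℝ) : ℍ[ℝ]) else 0


-- Lemma A: sum bound
lemma majA {n k : ℕ} (hk : k ≤ n) (d c : Fin n → ℝ)
    (hda : ∀ i j : Fin n, i ≤ j → d j ≤ d i)
    (hc0 : ∀ j, 0 ≤ c j) (hc1 : ∀ j, c j ≤ 1) (hcs : ∑ j, c j = (k : ℝ)) :
    ∑ j, c j * d j ≤ ∑ j : Fin n, (if (j : ℕ) < k then d j else 0) := by
  rcases Nat.eq_zero_or_pos k with rfl | hkpos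
  · have hz : ∀ j ∈ Finset.univ, c j = 0 := by
      intro j _
      have := (Finset.sum_eq_zero_iff_of_nonneg (fun j _ => hc0 j)).1 (by simpa using hcs)
      exact this j (Finset.mem_univ j)
    rw [Finset.sum_eq_zero (fun j hj => by rw [hz j hj, zero_mul]),
      Finset.sum_eq_zero (fun j _ => by simp)]
  · set kk : Fin n := ⟨k - 1, by omega⟩ with hkk
    set t : ℝ := d kk with ht
    have key : ∀ j : Fin n, c j * d j - (if (j : ℕ) < k then d j else 0)
        ≤ c j * t - (if (j : ℕ) < k then t else 0) := by
      intro j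
      by_cases h : (j : ℕ) < k
      · simp only [h, if_true]
        have hdj : t ≤ d j := hda j kk (by simp [hkk, Fin.le_def]; omega)
        nlinarith [hc1 j]
      · simp only [h, if_false]
        have hdj : d j ≤ t := hda kk j (by simp [hkk, Fin.le_def]; omega)
        nlinarith [hc0 j]
    have hsum := Finset.sum_le_sum (fun j (_ : j ∈ Finset.univ) => key j)
    rw [Finset.sum_sub_distrib, Finset.sum_sub_distrib] at hsum
    have htsum : ∑ j : Fin n, (if (j : ℕ) < k then t else 0) = (k : ℝ) * t := by
      rw [Fin.sum_univ_eq_sum_range (fun i => if i < k then t else 0) n]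
      rw [← Finset.sum_subset (Finset.range_subset_range.2 hk)
        (by intro x _ hx; simp at hx; simp [hx])]
      simp [Finset.sum_ite_of_true, mul_comm]
    have hcsum : ∑ j : Fin n, c j * t = (k : ℝ) * t := by
      rw [← Finset.sum_mul, hcs]
    linarith

-- Lemma B: equal partial sums imply equal
lemma majB {n : ℕ} (d e : Fin n → ℝ)
    (h : ∀ k, k ≤ n → ∑ j : Fin n, (if (j : ℕ) < k then d j else 0)
        = ∑ j : Fin n, (if (j : ℕ) < k then e j else 0)) :
    d = e := by
  funext i
  have key : ∀ f : Fin n → ℝ,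
      ∑ j : Fin n, (if (j : ℕ) < (i : ℕ) + 1 then f j else 0)
      - ∑ j : Fin n, (if (j : ℕ) < (i : ℕ) then f j else 0) = f i := by
    intro f
    rw [← Finset.sum_sub_distrib]
    rw [Finset.sum_eq_single i]
    · simp [Nat.lt_irrefl]
    · intro j _ hj
      have : (j : ℕ) ≠ (i : ℕ) := fun h => hj (Fin.ext h)
      by_cases h1 : (j : ℕ) < (i : ℕ)
      · simp [h1, Nat.lt_succ_of_lt h1]
      · have h2 : ¬ (j : ℕ) < (i : ℕ) + 1 := by omega
        simp [h1, h2]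
    · intro h; exact absurd (Finset.mem_univ i) h
  have h1 := h i.val (le_of_lt i.isLt)
  have h2 := h (i.val + 1) i.isLt
  have := key d
  have := key e
  linarith

-- Lemma C: doubly stochastic transfer, one direction
lemma majC1 {n : ℕ} (d e : Fin n → ℝ) (M : Matrix (Fin n) (Fin n) ℝ)
    (hM0 : ∀ i j, 0 ≤ M i j) (hrow : ∀ i, ∑ j, M i j = 1) (hcol : ∀ j, ∑ i, M i j = 1)
    (hda : ∀ i j : Fin n, i ≤ j → d j ≤ d i)
    (he : ∀ i, e i = ∑ j, M i j * d j) :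
    ∀ k, k ≤ n → ∑ j : Fin n, (if (j : ℕ) < k then e j else 0)
      ≤ ∑ j : Fin n, (if (j : ℕ) < k then d j else 0) := by
  intro k hk
  set c : Fin n → ℝ := fun j => ∑ i : Fin n, (if (i : ℕ) < k then M i j else 0) with hc
  have step : ∑ j : Fin n, (if (j : ℕ) < k then e j else 0) = ∑ j : Fin n, c j * d j := by
    have e1 : ∀ i : Fin n, (if (i : ℕ) < k then e i else 0)
        = ∑ j : Fin n, (if (i : ℕ) < k then M i j * d j else 0) := by
      intro i
      split_ifs with h
      · rw [he i]
      · simp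
    rw [Finset.sum_congr rfl (fun i _ => e1 i), Finset.sum_comm]
    apply Finset.sum_congr rfl
    intro j _
    rw [hc]
    rw [Finset.sum_mul]
    apply Finset.sum_congr rfl
    intro i _
    split_ifs <;> simp
  rw [step]
  apply majA hk d c hda
  · intro j
    apply Finset.sum_nonneg
    intro i _
    split_ifs
    · exact hM0 i j
    · exact le_refl 0
  · intro j
    calc c j ≤ ∑ i : Fin n, M i j := by
          apply Finset.sum_le_sum
          intro i _
          split_ifs
          · exact le_refl _
          · exact hM0 i j
      _ = 1 := hcol j
  · rw [hc]
    rw [Finset.sum_comm]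
    have : ∀ i : Fin n, ∑ j : Fin n, (if (i : ℕ) < k then M i j else 0)
        = (if (i : ℕ) < k then (1:ℝ) else 0) := by
      intro i
      split_ifs with h
      · exact hrow i
      · simp
    rw [Finset.sum_congr rfl (fun i _ => this i)]
    rw [Fin.sum_univ_eq_sum_range (fun i => if i < k then (1:ℝ) else 0) n]
    rw [← Finset.sum_subset (Finset.range_subset_range.2 hk)
      (by intro x _ hx; simp at hx; simp [hx])]
    rw [Finset.sum_ite_of_true (fun x hx => Finset.mem_range.1 hx)]
    simp

lemma majC {n : ℕ} (d e : Fin n → ℝ) (M : Matrix (Fin n) (Fin n) ℝ)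
    (hM0 : ∀ i j, 0 ≤ M i j) (hrow : ∀ i, ∑ j, M i j = 1) (hcol : ∀ j, ∑ i, M i j = 1)
    (hda : ∀ i j : Fin n, i ≤ j → d j ≤ d i) (hea : ∀ i j : Fin n, i ≤ j → e j ≤ e i)
    (he : ∀ i, e i = ∑ j, M i j * d j) (hd : ∀ j, d j = ∑ i, M i j * e i) :
    d = e := by
  apply majB
  intro k hk
  have h1 := majC1 d e M hM0 hrow hcol hda he k hk
  have h2 := majC1 e d Mᵀ (fun i j => hM0 j i) hcol hrow hea
    (fun j => by rw [hd j]; apply Finset.sum_congr rfl; intro i _; rfl) k hk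
  linarith

-- coercion of sums
lemma qcoe_sum {α : Type*} (s : Finset α) (f : α → ℝ) :
    ((∑ a ∈ s, f a : ℝ) : ℍ[ℝ]) = ∑ a ∈ s, ((f a : ℝ) : ℍ[ℝ]) :=
  map_sum (algebraMap ℝ ℍ[ℝ]) f s

-- entry formula for unitary conjugation of a real diagonal
lemma entry_formula {n : ℕ} (Q : Matrix (Fin n) (Fin n) ℍ[ℝ]) (d e : Fin n → ℝ)
    (h : Q * Matrix.diagonal (fun i => ((d i : ℝ) : ℍ[ℝ])) * Qᴴ
       = Matrix.diagonal (fun i => ((e i : ℝ) : ℍ[ℝ]))) :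
    ∀ i, e i = ∑ j, Quaternion.normSq (Q i j) * d j := by
  intro i
  have h1 := congrFun (congrFun h i) i
  rw [Matrix.diagonal_apply_eq] at h1
  have h2 : (Q * Matrix.diagonal (fun i => ((d i : ℝ) : ℍ[ℝ])) * Qᴴ) i i
      = ∑ j, ((Quaternion.normSq (Q i j) * d j : ℝ) : ℍ[ℝ]) := by
    rw [Matrix.mul_apply]
    apply Finset.sum_congr rfl
    intro j _
    rw [Matrix.mul_apply, Matrix.conjTranspose_apply]
    rw [Finset.sum_eq_single j]
    · rw [Matrix.diagonal_apply_eq]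
      calc Q i j * (d j : ℍ[ℝ]) * star (Q i j)
          = (d j : ℍ[ℝ]) * (Q i j * star (Q i j)) := by
            rw [← Quaternion.coe_commutes, mul_assoc]
        _ = (d j : ℍ[ℝ]) * ((Quaternion.normSq (Q i j) : ℝ) : ℍ[ℝ]) := by
            rw [Quaternion.self_mul_star]
        _ = ((Quaternion.normSq (Q i j) * d j : ℝ) : ℍ[ℝ]) := by
            rw [← Quaternion.coe_mul, mul_comm]
    · intro b _ hb
      rw [Matrix.diagonal_apply_ne _ hb, mul_zero]
    · intro hj; exact absurd (Finset.mem_univ j) hj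
  rw [h2, ← qcoe_sum] at h1
  exact (Quaternion.coe_injective h1).symm

-- doubly-stochasticity of |Q i j|^2 for a unitary Q
lemma qrow_sum {n : ℕ} (Q : Matrix (Fin n) (Fin n) ℍ[ℝ]) (h2 : Q * Qᴴ = 1) (i : Fin n) :
    ∑ j, Quaternion.normSq (Q i j) = 1 := by
  have h := congrFun (congrFun h2 i) i
  rw [Matrix.mul_apply, Matrix.one_apply_eq] at h
  apply Quaternion.coe_injective
  rw [qcoe_sum]
  calc ∑ j, ((Quaternion.normSq (Q i j) : ℝ) : ℍ[ℝ])
      = ∑ j, Q i j * star (Q i j) := by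
        apply Finset.sum_congr rfl
        intro j _
        rw [Quaternion.self_mul_star]
    _ = (1 : ℍ[ℝ]) := by
        rw [← h]
        apply Finset.sum_congr rfl
        intro j _
        rw [Matrix.conjTranspose_apply]
    _ = ((1 : ℝ) : ℍ[ℝ]) := Quaternion.coe_one.symm

-- the main matrix-level uniqueness lemma
lemma qdiag_unitary {n : ℕ} (Q : Matrix (Fin n) (Fin n) ℍ[ℝ])
    (h1 : Qᴴ * Q = 1) (h2 : Q * Qᴴ = 1) (d e : Fin n → ℝ)
    (hda : ∀ i j : Fin n, i ≤ j → d j ≤ d i) (hea : ∀ i j : Fin n, i ≤ j → e j ≤ e i)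
    (hQ : Q * Matrix.diagonal (fun i => ((d i : ℝ) : ℍ[ℝ])) * Qᴴ
        = Matrix.diagonal (fun i => ((e i : ℝ) : ℍ[ℝ]))) :
    d = e := by
  have hQ' : Qᴴ * Matrix.diagonal (fun i => ((e i : ℝ) : ℍ[ℝ])) * (Qᴴ)ᴴ
      = Matrix.diagonal (fun i => ((d i : ℝ) : ℍ[ℝ])) := by
    rw [Matrix.conjTranspose_conjTranspose, ← hQ]
    calc Qᴴ * (Q * Matrix.diagonal (fun i => ((d i : ℝ) : ℍ[ℝ])) * Qᴴ) * Q
        = (Qᴴ * Q) * Matrix.diagonal (fun i => ((d i : ℝ) : ℍ[ℝ])) * (Qᴴ * Q) := by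
          noncomm_ring
      _ = _ := by rw [h1, one_mul, mul_one]
  have he := entry_formula Q d e hQ
  have hd := entry_formula Qᴴ e d hQ'
  apply majC d e (fun i j => Quaternion.normSq (Q i j))
    (fun i j => Quaternion.normSq_nonneg)
    (qrow_sum Q h2) (fun j => by
      have := qrow_sum Qᴴ (by rw [Matrix.conjTranspose_conjTranspose, h1]) j
      calc ∑ i, Quaternion.normSq (Q i j)
          = ∑ i, Quaternion.normSq (Qᴴ j i) := by
            apply Finset.sum_congr rfl
            intro i _
            rw [Matrix.conjTranspose_apply, Quaternion.normSq_star]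
        _ = 1 := this)
    hda hea he (fun j => by
      rw [hd j]
      apply Finset.sum_congr rfl
      intro i _
      rw [Matrix.conjTranspose_apply, Quaternion.normSq_star])

-- product of a realDiag with its conjugate transpose
lemma realDiag_mul_conjT (N1 N2 : ℕ) (σ : ℕ → ℝ) :
    realDiag N1 N2 σ * (realDiag N1 N2 σ)ᴴ
    = Matrix.diagonal (fun i : Fin N1 =>
        (((if (i : ℕ) < N2 then σ (i : ℕ) ^ 2 else 0) : ℝ) : ℍ[ℝ])) := by
  funext i i'
  rw [Matrix.mul_apply]
  by_cases h : (i : ℕ) < N2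
  · rw [Finset.sum_eq_single (⟨(i : ℕ), h⟩ : Fin N2)]
    · by_cases hii : i = i'
      · subst hii
        simp only [Matrix.diagonal_apply_eq, realDiag, Matrix.conjTranspose_apply, if_pos rfl, h,
          if_true, Quaternion.star_coe, ← Quaternion.coe_mul, sq]
      · have hne : ¬ ((i' : ℕ) = (i : ℕ)) := fun hh => hii (Fin.ext hh.symm)
        rw [Matrix.diagonal_apply_ne _ hii]
        simp only [realDiag, Matrix.conjTranspose_apply]
        simp [hne]
    · intro b _ hb
      have hne : ¬ ((i : ℕ) = (b : ℕ)) := by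
        intro hh
        exact hb (Fin.ext hh.symm)
      simp [realDiag, hne]
    · intro hmm; exact absurd (Finset.mem_univ _) hmm
  · rw [Finset.sum_eq_zero]
    · by_cases hii : i = i'
      · subst hii
        simp [Matrix.diagonal_apply_eq, h]
      · rw [Matrix.diagonal_apply_ne _ hii]
    · intro j _
      have hne : ¬ ((i : ℕ) = (j : ℕ)) := by
        have := j.isLt; omega
      simp [realDiag, hne]

-- slice-level singular value uniqueness
lemma slice_sv {N1 N2 : ℕ} (W W' : Matrix (Fin N1) (Fin N1) ℍ[ℝ])
    (X X' : Matrix (Fin N2) (Fin N2) ℍ[ℝ]) (σ σ' : ℕ → ℝ)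
    (hW1 : Wᴴ * W = 1) (hW2 : W * Wᴴ = 1)
    (hW'1 : W'ᴴ * W' = 1) (hW'2 : W' * W'ᴴ = 1)
    (hX1 : Xᴴ * X = 1) (hX'1 : X'ᴴ * X' = 1)
    (hσ0 : ∀ k, 0 ≤ σ k) (hσa : Antitone σ)
    (hσ0' : ∀ k, 0 ≤ σ' k) (hσa' : Antitone σ')
    (heq : W * (realDiag N1 N2 σ * Xᴴ) = W' * (realDiag N1 N2 σ' * X'ᴴ)) :
    ∀ k, k < min N1 N2 → σ k = σ' k := by
  have hBB : W * (realDiag N1 N2 σ * (realDiag N1 N2 σ)ᴴ) * Wᴴ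
      = W' * (realDiag N1 N2 σ' * (realDiag N1 N2 σ')ᴴ) * W'ᴴ := by
    have e1 : ∀ (Y : Matrix (Fin N1) (Fin N1) ℍ[ℝ]) (Z : Matrix (Fin N2) (Fin N2) ℍ[ℝ])
        (τ : ℕ → ℝ), Zᴴ * Z = 1 →
        (Y * (realDiag N1 N2 τ * Zᴴ)) * (Y * (realDiag N1 N2 τ * Zᴴ))ᴴ
        = Y * (realDiag N1 N2 τ * (realDiag N1 N2 τ)ᴴ) * Yᴴ := by
      intro Y Z τ hZ
      have hcancel : ∀ (C : Matrix (Fin N2) (Fin N1) ℍ[ℝ]), Zᴴ * (Z * C) = C := by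
        intro C
        rw [← Matrix.mul_assoc, hZ, Matrix.one_mul]
      rw [Matrix.conjTranspose_mul, Matrix.conjTranspose_mul,
        Matrix.conjTranspose_conjTranspose]
      simp only [Matrix.mul_assoc]
      rw [hcancel]
    rw [← e1 W X σ hX1, ← e1 W' X' σ' hX'1, heq]
  have key : (W'ᴴ * W) * (realDiag N1 N2 σ * (realDiag N1 N2 σ)ᴴ) * (W'ᴴ * W)ᴴ
      = realDiag N1 N2 σ' * (realDiag N1 N2 σ')ᴴ := by
    rw [Matrix.conjTranspose_mul, Matrix.conjTranspose_conjTranspose]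
    calc (W'ᴴ * W) * (realDiag N1 N2 σ * (realDiag N1 N2 σ)ᴴ) * (Wᴴ * W')
        = W'ᴴ * (W * (realDiag N1 N2 σ * (realDiag N1 N2 σ)ᴴ) * Wᴴ) * W' := by
          noncomm_ring
      _ = W'ᴴ * (W' * (realDiag N1 N2 σ' * (realDiag N1 N2 σ')ᴴ) * W'ᴴ) * W' := by rw [hBB]
      _ = (W'ᴴ * W') * (realDiag N1 N2 σ' * (realDiag N1 N2 σ')ᴴ) * (W'ᴴ * W') := by
          noncomm_ring
      _ = _ := by rw [hW'1, one_mul, mul_one]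
  rw [realDiag_mul_conjT, realDiag_mul_conjT] at key
  have hQ1 : (W'ᴴ * W)ᴴ * (W'ᴴ * W) = 1 := by
    rw [Matrix.conjTranspose_mul, Matrix.conjTranspose_conjTranspose]
    calc Wᴴ * W' * (W'ᴴ * W) = Wᴴ * (W' * W'ᴴ) * W := by noncomm_ring
      _ = 1 := by rw [hW'2, mul_one, hW1]
  have hQ2 : (W'ᴴ * W) * (W'ᴴ * W)ᴴ = 1 := by
    rw [Matrix.conjTranspose_mul, Matrix.conjTranspose_conjTranspose]
    calc W'ᴴ * W * (Wᴴ * W') = W'ᴴ * (W * Wᴴ) * W' := by noncomm_ring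
      _ = 1 := by rw [hW2, mul_one, hW'1]
  have hant : ∀ (τ : ℕ → ℝ), (∀ k, 0 ≤ τ k) → Antitone τ →
      ∀ i j : Fin N1, i ≤ j →
        (if (j : ℕ) < N2 then τ (j : ℕ) ^ 2 else 0)
        ≤ (if (i : ℕ) < N2 then τ (i : ℕ) ^ 2 else 0) := by
    intro τ h0 ha i j hij
    by_cases hj : (j : ℕ) < N2
    · have hi : (i : ℕ) < N2 := lt_of_le_of_lt (Fin.le_def.1 hij) hj
      rw [if_pos hj, if_pos hi]
      exact pow_le_pow_left₀ (h0 _) (ha (Fin.le_def.1 hij)) 2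
    · rw [if_neg hj]
      split_ifs
      · positivity
      · exact le_rfl
  have := qdiag_unitary (W'ᴴ * W) hQ1 hQ2
    (fun i => if (i : ℕ) < N2 then σ (i : ℕ) ^ 2 else 0)
    (fun i => if (i : ℕ) < N2 then σ' (i : ℕ) ^ 2 else 0)
    (hant σ hσ0 hσa) (hant σ' hσ0' hσa') key
  intro k hk
  have hk1 : k < N1 := lt_of_lt_of_le hk (min_le_left _ _)
  have hk2 : k < N2 := lt_of_lt_of_le hk (min_le_right _ _)
  have := congrFun this ⟨k, hk1⟩
  simp only [hk2, if_pos] at this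
  nlinarith [hσ0 k, hσ0' k, sq_nonneg (σ k - σ' k), sq_nonneg (σ k + σ' k)]

-- ## Tensor-level transform lemmas

lemma hatT_hatT (T S : Matrix ι ι ℍ[ℝ]) (hTS : T * S = 1) {m n : ℕ} (A : QT ι m n) :
    hatT T (hatT S A) = A := by
  funext ν i j
  simp only [hatT]
  calc ∑ μ, T ν μ * ∑ ρ, S μ ρ * A ρ i j
      = ∑ μ, ∑ ρ, (T ν μ * S μ ρ) * A ρ i j := by
        apply Finset.sum_congr rfl
        intro μ _
        rw [Finset.mul_sum]
        apply Finset.sum_congr rfl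
        intro ρ _
        rw [mul_assoc]
    _ = ∑ ρ, ∑ μ, (T ν μ * S μ ρ) * A ρ i j := Finset.sum_comm
    _ = ∑ ρ, ((T * S) ν ρ) * A ρ i j := by
        apply Finset.sum_congr rfl
        intro ρ _
        rw [Matrix.mul_apply, Finset.sum_mul]
    _ = A ν i j := by
        rw [hTS]
        simp [Matrix.one_apply]

lemma hatT_qt' (T S : Matrix ι ι ℍ[ℝ]) (hTS : T * S = 1) {m p n : ℕ}
    (A : QT ι m p) (B : QT ι p n) (ν : ι) :
    hatT T (qt T S A B) ν = hatT T A ν * hatT T B ν := by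
  unfold qt
  rw [hatT_hatT T S hTS]
  rfl

lemma hatT_qtH' (T S : Matrix ι ι ℍ[ℝ]) (hTS : T * S = 1) {m n : ℕ}
    (A : QT ι m n) (ν : ι) :
    hatT T (qtH T S A) ν = (hatT T A ν)ᴴ := by
  unfold qtH
  rw [hatT_hatT T S hTS]

lemma hatT_qtId' (T S : Matrix ι ι ℍ[ℝ]) (hTS : T * S = 1) (p : ℕ) (ν : ι) :
    hatT T (qtId S p) ν = 1 := by
  unfold qtId
  rw [hatT_hatT T S hTS]

lemma unitary_slice (T S : Matrix ι ι ℍ[ℝ]) (hTS : T * S = 1) {p : ℕ}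
    (U : QT ι p p) (hU : qtUnitary T S U) (ν : ι) :
    (hatT T U ν)ᴴ * hatT T U ν = 1 ∧ hatT T U ν * (hatT T U ν)ᴴ = 1 := by
  obtain ⟨h1, h2⟩ := hU
  constructor
  · have h := congrFun (congrArg (hatT T) h1) ν
    rw [hatT_qt' T S hTS, hatT_qtH' T S hTS, hatT_qtId' T S hTS] at h
    exact h
  · have h := congrFun (congrArg (hatT T) h2) ν
    rw [hatT_qt' T S hTS, hatT_qtH' T S hTS, hatT_qtId' T S hTS] at h
    exact h

lemma tubeNorm_pos_iff (T S : Matrix ι ι ℍ[ℝ]) (hST : S * T = 1) (hTS : T * S = 1)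
    {N1 N2 : ℕ} (Dx : QT ι N1 N2) (σx : ι → ℕ → ℝ)
    (hDx : ∀ ν, hatT T Dx ν = realDiag N1 N2 (σx ν))
    (k : ℕ) (h1 : k < N1) (h2 : k < N2) :
    (0 < tubeNorm Dx k ↔ ∃ ν, σx ν k ≠ 0) := by
  have hdt : ∀ ν, diagTube Dx k ν = Dx ν ⟨k, h1⟩ ⟨k, h2⟩ := by
    intro ν
    unfold diagTube
    rw [dif_pos ⟨h1, h2⟩]
  have hσD : ∀ ν, hatT T Dx ν ⟨k, h1⟩ ⟨k, h2⟩ = ((σx ν k : ℝ) : ℍ[ℝ]) := by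
    intro ν
    rw [hDx ν]
    unfold realDiag
    simp
  have hiff : (∀ ν, Dx ν ⟨k, h1⟩ ⟨k, h2⟩ = 0) ↔ (∀ ν, σx ν k = 0) := by
    constructor
    · intro h ν
      have : hatT T Dx ν ⟨k, h1⟩ ⟨k, h2⟩ = 0 := by
        unfold hatT
        rw [Finset.sum_eq_zero]
        intro μ _
        rw [h μ, mul_zero]
      rw [hσD ν] at this
      exact Quaternion.coe_injective (this.trans Quaternion.coe_zero.symm)
    · intro h ν
      have hD0 : ∀ μ, hatT T Dx μ ⟨k, h1⟩ ⟨k, h2⟩ = 0 := by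
        intro μ
        rw [hσD μ, h μ, Quaternion.coe_zero]
      have := congrFun (congrFun (congrFun (hatT_hatT S T hST Dx) ν) ⟨k, h1⟩) ⟨k, h2⟩
      rw [← this]
      show (∑ μ, S ν μ * hatT T Dx μ ⟨k, h1⟩ ⟨k, h2⟩) = 0
      rw [Finset.sum_eq_zero]
      intro μ _
      rw [hD0 μ, mul_zero]
  unfold tubeNorm
  rw [Real.sqrt_pos]
  have hnn : (0:ℝ) ≤ ∑ ν, ‖diagTube Dx k ν‖ ^ 2 :=
    Finset.sum_nonneg (fun ν _ => sq_nonneg _)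
  have hzero : (∑ ν, ‖diagTube Dx k ν‖ ^ 2 = 0) ↔ ∀ ν, σx ν k = 0 := by
    rw [Finset.sum_eq_zero_iff_of_nonneg (fun ν _ => sq_nonneg _)]
    rw [← hiff]
    constructor
    · intro h ν
      have := h ν (Finset.mem_univ ν)
      rw [← hdt ν]
      exact norm_eq_zero.1 (pow_eq_zero_iff two_ne_zero |>.1 this)
    · intro h ν _
      rw [hdt ν, h ν, norm_zero]
      norm_num
  constructor
  · intro hpos
    by_contra hno
    push_neg at hno
    have hno' : ∑ ν, ‖diagTube Dx k ν‖ ^ 2 = 0 := hzero.2 hno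
    linarith
  · rintro ⟨ν, hν⟩
    rcases lt_or_eq_of_le hnn with h | h
    · exact h
    · exfalso
      exact hν (hzero.1 h.symm ν)

/-- uniqueness of the singular values (hence of the TQt-rank) across
different TQt-SVDs of the same quaternion tensor. -/
theorem stmt12 {ι : Type*} [Fintype ι] [DecidableEq ι]
    (T S : Matrix ι ι ℍ[ℝ]) (hST : S * T = 1) (hTS : T * S = 1)
    {N1 N2 : ℕ} (A : QT ι N1 N2)
    (U : QT ι N1 N1) (D : QT ι N1 N2) (V : QT ι N2 N2)
    (hU : qtUnitary T S U) (hV : qtUnitary T S V)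
    (σ : ι → ℕ → ℝ) (hD : ∀ ν, hatT T D ν = realDiag N1 N2 (σ ν))
    (hσ0 : ∀ ν k, 0 ≤ σ ν k) (hσa : ∀ ν, Antitone (σ ν))
    (hA : A = qt T S U (qt T S D (qtH T S V)))
    (U' : QT ι N1 N1) (D' : QT ι N1 N2) (V' : QT ι N2 N2)
    (hU' : qtUnitary T S U') (hV' : qtUnitary T S V')
    (σ' : ι → ℕ → ℝ) (hD' : ∀ ν, hatT T D' ν = realDiag N1 N2 (σ' ν))
    (hσ0' : ∀ ν k, 0 ≤ σ' ν k) (hσa' : ∀ ν, Antitone (σ' ν))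
    (hA' : A = qt T S U' (qt T S D' (qtH T S V'))) :
    (∀ ν (k : ℕ), k < min N1 N2 → σ ν k = σ' ν k) ∧ tqtRank D = tqtRank D' := by
  have hsv : ∀ ν (k : ℕ), k < min N1 N2 → σ ν k = σ' ν k := by
    intro ν
    have hUs := unitary_slice T S hTS U hU ν
    have hU's := unitary_slice T S hTS U' hU' ν
    have hVs := unitary_slice T S hTS V hV ν
    have hV's := unitary_slice T S hTS V' hV' ν
    have e1 : hatT T A ν = hatT T U ν * (realDiag N1 N2 (σ ν) * (hatT T V ν)ᴴ) := by
      rw [hA, hatT_qt' T S hTS, hatT_qt' T S hTS, hatT_qtH' T S hTS, hD ν]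
    have e2 : hatT T A ν = hatT T U' ν * (realDiag N1 N2 (σ' ν) * (hatT T V' ν)ᴴ) := by
      rw [hA', hatT_qt' T S hTS, hatT_qt' T S hTS, hatT_qtH' T S hTS, hD' ν]
    exact slice_sv (hatT T U ν) (hatT T U' ν) (hatT T V ν) (hatT T V' ν) (σ ν) (σ' ν)
      hUs.1 hUs.2 hU's.1 hU's.2 hVs.1 hV's.1
      (hσ0 ν) (hσa ν) (hσ0' ν) (hσa' ν) (e1.symm.trans e2)
  refine ⟨hsv, ?_⟩
  unfold tqtRank
  congr 1
  apply Finset.filter_congr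
  intro k hk
  have hk' := Finset.mem_range.1 hk
  have h1 : k < N1 := lt_of_lt_of_le hk' (min_le_left _ _)
  have h2 : k < N2 := lt_of_lt_of_le hk' (min_le_right _ _)
  rw [tubeNorm_pos_iff T S hST hTS D σ hD k h1 h2,
    tubeNorm_pos_iff T S hST hTS D' σ' hD' k h1 h2]
  constructor
  · rintro ⟨ν, hν⟩
    exact ⟨ν, by rw [← hsv ν k hk']; exact hν⟩
  · rintro ⟨ν, hν⟩
    exact ⟨ν, by rw [hsv ν k hk']; exact hν⟩

end
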